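/- Let d ∈ (0,1), l > 0, let F ∈ SR_d^{⌊l+d⌋+2}(0+), set f = F^{(0,1)}, let g : [0,∞) → ℝ be càdlàg, let t ∈ (0,1), let ε ∈ (0,l), and let P be a polynomial of degree at most ⌊l⌋ such that |g(r) − P(r)| ≤ C₀|r−t|^{l−ε} for all r ∈ [0,1] and some C₀ > 0. Then there exist constants C > 0 and h' > 0 such that |∫_{t−δ}^{v} (f(u,r) − f(v,r))[g(r) − P(r)]dr| ≤ C·F(u,v)·(|u−t|^{l−ε} + |v−t|^{l−ε}) for all u,v ∈ (t, t+h') with u − v = δ > 0. -/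

import Mathlib

/-!
Near the diagonal the smooth-variation conditions fix the signs of the partial derivatives
of `F`: `∂ᵣF < 0` and `∂ₛF > 0` because `d > 0`, and `∂ₛ∂ᵣF > 0` because `d (d - 1) < 0`.
So for `v < u` the weight `f(u,r) - f(v,r)` is nonnegative on `[t - δ, v]`, where moreover
`|r - t| ≤ u - t`. The integral is therefore at most `C₀ (|u - t|^(l-ε) + |v - t|^(l-ε))` times
`∫_{t-δ}^v (f(u,r) - f(v,r)) dr = F(u,v) - F(u,t-δ) - F(v,v) + F(v,t-δ) ≤ F(u,v)`.
-/

open Set Filter MeasureTheory intervalIntegral Polynomial Metric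
open scoped Topology

noncomputable section

/-- Mixed partial derivative `F^{(n,m)}`: `n` derivatives in the first (time) variable
and `m` derivatives in the second variable. -/
noncomputable def pderiv2 (n m : ℕ) (F : ℝ → ℝ → ℝ) : ℝ → ℝ → ℝ :=
  fun s r => iteratedDeriv m (fun r' => iteratedDeriv n (fun s' => F s' r') s) r

/-- The closed half-plane `E = {(s,r) : r ≤ s}`. -/
def Ebar : Set (ℝ × ℝ) := {p | p.2 ≤ p.1}

/-- The open half-plane `Ẽ = {(s,r) : r < s}`. -/
def Etil : Set (ℝ × ℝ) := {p | p.2 < p.1}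

/-- Membership in `C₊^{(k)}(E)` : continuous on `E`, `k` times continuously
differentiable on `Ẽ`, and strictly positive on `Ẽ`. -/
structure CPlus (k : ℕ) (F : ℝ → ℝ → ℝ) : Prop where
  cont : ContinuousOn (fun p : ℝ × ℝ => F p.1 p.2) Ebar
  smooth : ContDiffOn ℝ k (fun p : ℝ × ℝ => F p.1 p.2) Etil
  pos : ∀ p ∈ Etil, 0 < F p.1 p.2

/-- `F` is a function of smooth variation of index `(ρ, k)` at the diagonal,
i.e. `F ∈ SR_ρ^k(0+)`. -/
structure SmoothVariation (ρ : ℝ) (k : ℕ) (F : ℝ → ℝ → ℝ) : Prop where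
  mem : CPlus k F
  condA : ∀ K : Set ℝ, IsCompact K → ∀ ε > 0, ∃ h₀ > 0, ∀ h : ℝ, 0 < h → h < h₀ →
    ∀ t ∈ K, |h * pderiv2 0 1 F t (t - h) / F t (t - h) + ρ| < ε
  condB : ∀ K : Set ℝ, IsCompact K → ∀ ε > 0, ∃ h₀ > 0, ∀ h : ℝ, 0 < h → h < h₀ →
    ∀ t ∈ K, |h * pderiv2 1 0 F (t + h) t / F (t + h) t - ρ| < ε
  condC : ∀ j : ℕ, 2 ≤ j → j ≤ k → ∀ K : Set ℝ, IsCompact K → ∀ ε > 0, ∃ h₀ > 0,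
    ∀ h : ℝ, 0 < h → h < h₀ → ∀ t ∈ K,
      |h ^ j * pderiv2 (j - 1) 1 F t (t - h) / F t (t - h)
        + ∏ i ∈ Finset.range j, (ρ - (i : ℝ))| < ε
  condD : ∀ K : Set ℝ, IsCompact K → ∀ ε > 0, ∃ h₀ > 0, ∀ h : ℝ, 0 < h → h < h₀ →
    ∀ t ∈ K, |h ^ 2 * pderiv2 0 2 F t (t - h) / F t (t - h) - ρ * (ρ - 1)| < ε

/-- The 2-microlocal space with gauge function `F`, `C_F^{d,s'}(t₀)`. -/
def MemCF (F : ℝ → ℝ → ℝ) (d s' t₀ : ℝ) (g : ℝ → ℝ) : Prop :=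
  ∃ C > 0, ∃ h > 0, ∃ P : Polynomial ℝ, (P.natDegree : ℤ) ≤ ⌊d - s'⌋ ∧
    ∀ u v : ℝ, u ∈ Metric.ball t₀ h → v ∈ Metric.ball t₀ h → v ≤ u →
      |(g u - P.eval u) - (g v - P.eval v)| ≤
        C * F u v * (|u - t₀| + |v - t₀|) ^ (-s')

/-- The classical 2-microlocal space `C^{σ,s'}(t₀)`. -/
def MemC2ML (σ s' t₀ : ℝ) (g : ℝ → ℝ) : Prop :=
  ∃ C > 0, ∃ h > 0, ∃ P : Polynomial ℝ, (P.natDegree : ℤ) ≤ ⌊σ - s'⌋ ∧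
    ∀ u v : ℝ, u ∈ Metric.ball t₀ h → v ∈ Metric.ball t₀ h →
      |(g u - P.eval u) - (g v - P.eval v)| ≤
        C * |u - v| ^ σ * (|u - t₀| + |v - t₀|) ^ (-s')

/-- The pointwise Hölder space `C^l(t₀)`. -/
def PtwHolder (l t₀ : ℝ) (g : ℝ → ℝ) : Prop :=
  ∃ C > 0, ∃ h > 0, ∃ P : Polynomial ℝ, (P.natDegree : ℤ) ≤ ⌊l⌋ ∧
    ∀ t ∈ Metric.ball t₀ h, |g t - P.eval t| ≤ C * |t - t₀| ^ l

/-- The pointwise Hölder exponent `h_g(t₀) = sup{l : g ∈ C^l(t₀)}`. -/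
def holderExp (g : ℝ → ℝ) (t₀ : ℝ) : ℝ := sSup {l | PtwHolder l t₀ g}

/-- The Hölder exponent with gauge function `F`,
`h̄^d_g(t₀) = d − inf{s' ≤ 0 : g ∈ C_F^{d,s'}(t₀)}`. -/
def holderGaugeExp (F : ℝ → ℝ → ℝ) (d : ℝ) (g : ℝ → ℝ) (t₀ : ℝ) : ℝ :=
  d - sInf {s' | s' ≤ 0 ∧ MemCF F d s' t₀ g}

/-- The 2-microlocal frontier `σ_{g,t₀}(s') = sup{σ ∈ [0,1) : g ∈ C^{σ,s'}(t₀)}`. -/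
def frontier2ML (g : ℝ → ℝ) (t₀ s' : ℝ) : ℝ :=
  sSup {σ | σ ∈ Set.Ico (0:ℝ) 1 ∧ MemC2ML σ s' t₀ g}

/-- `g` is càdlàg on `[0,∞)`: right-continuous with left limits. -/
def CadlagOn (g : ℝ → ℝ) : Prop :=
  (∀ t : ℝ, 0 ≤ t → Tendsto g (𝓝[Set.Ici t] t) (𝓝 (g t))) ∧
  (∀ t : ℝ, 0 < t → ∃ L : ℝ, Tendsto g (𝓝[Set.Iio t] t) (𝓝 L))

open Function

lemma pderiv2_zero_one_eq_deriv (F : ℝ → ℝ → ℝ) (s r : ℝ) :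
    pderiv2 0 1 F s r = deriv (F s) r := by
  simp [pderiv2]

lemma pderiv2_one_zero_eq_deriv (F : ℝ → ℝ → ℝ) (s r : ℝ) :
    pderiv2 1 0 F s r = deriv (F · r) s := by
  simp [pderiv2]

lemma pderiv2_one_one_eq_deriv (F : ℝ → ℝ → ℝ) (s r : ℝ) :
    pderiv2 1 1 F s r = deriv (fun r' => pderiv2 1 0 F s r') r := by
  simp only [pderiv2, iteratedDeriv_zero, iteratedDeriv_one]

section Slices

variable {E : Type*} [NormedAddCommGroup E] [NormedSpace ℝ E]
  {G : ℝ × ℝ → E} {G' : ℝ × ℝ →L[ℝ] E} {s r : ℝ}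

lemma HasFDerivAt.hasDerivAt_slice_fst (h : HasFDerivAt G G' (s, r)) :
    HasDerivAt (fun s' => G (s', r)) (G' (1, 0)) s :=
  h.comp_hasDerivAt s ((hasDerivAt_id s).prodMk (hasDerivAt_const s r))

lemma HasFDerivAt.hasDerivAt_slice_snd (h : HasFDerivAt G G' (s, r)) :
    HasDerivAt (fun r' => G (s, r')) (G' (0, 1)) r :=
  h.comp_hasDerivAt r ((hasDerivAt_const r s).prodMk (hasDerivAt_id r))

end Slices

section PartialDerivatives

variable {F : ℝ → ℝ → ℝ} {s r : ℝ}

lemma pderiv2_zero_one_eq_fderiv (hF : DifferentiableAt ℝ (uncurry F) (s, r)) :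
    pderiv2 0 1 F s r = fderiv ℝ (uncurry F) (s, r) (0, 1) := by
  rw [pderiv2_zero_one_eq_deriv]
  exact hF.hasFDerivAt.hasDerivAt_slice_snd.deriv

lemma pderiv2_one_zero_eq_fderiv (hF : DifferentiableAt ℝ (uncurry F) (s, r)) :
    pderiv2 1 0 F s r = fderiv ℝ (uncurry F) (s, r) (1, 0) := by
  rw [pderiv2_one_zero_eq_deriv]
  exact hF.hasFDerivAt.hasDerivAt_slice_fst.deriv

lemma hasDerivAt_pderiv2_zero_one (hF : DifferentiableAt ℝ (uncurry F) (s, r)) :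
    HasDerivAt (F s) (pderiv2 0 1 F s r) r := by
  rw [pderiv2_zero_one_eq_fderiv hF]
  exact hF.hasFDerivAt.hasDerivAt_slice_snd

lemma hasDerivAt_pderiv2_one_zero (hF : DifferentiableAt ℝ (uncurry F) (s, r)) :
    HasDerivAt (F · r) (pderiv2 1 0 F s r) s := by
  rw [pderiv2_one_zero_eq_fderiv hF]
  exact hF.hasFDerivAt.hasDerivAt_slice_fst

/-- `pderiv2 1 1` differentiates in `s` first, so this is the symmetry of second derivatives. -/
lemma hasDerivAt_pderiv2_zero_one_fst (hF : ContDiffAt ℝ 2 (uncurry F) (s, r)) :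
    HasDerivAt (fun s' => pderiv2 0 1 F s' r) (pderiv2 1 1 F s r) s := by
  set D := fderiv ℝ (fderiv ℝ (uncurry F)) (s, r)
  have hD : HasFDerivAt (fderiv ℝ (uncurry F)) D (s, r) :=
    ((hF.fderiv_right (m := 1) one_add_one_eq_two.le).differentiableAt one_ne_zero).hasFDerivAt
  have hdiff : ∀ᶠ p in 𝓝 (s, r), DifferentiableAt ℝ (uncurry F) p :=
    (hF.eventually (by simp)).mono fun p hp => hp.differentiableAt two_ne_zero
  have hfst : (fun s' => pderiv2 0 1 F s' r) =ᶠ[𝓝 s]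
      fun s' => fderiv ℝ (uncurry F) (s', r) (0, 1) :=
    ((continuous_id.prodMk continuous_const).tendsto s |>.eventually hdiff).mono
      fun s' hs' => pderiv2_zero_one_eq_fderiv hs'
  have hsnd : (fun r' => pderiv2 1 0 F s r') =ᶠ[𝓝 r]
      fun r' => fderiv ℝ (uncurry F) (s, r') (1, 0) :=
    ((continuous_const.prodMk continuous_id).tendsto r |>.eventually hdiff).mono
      fun r' hr' => pderiv2_one_zero_eq_fderiv hr'
  have hmixed : pderiv2 1 1 F s r = D (0, 1) (1, 0) := by
    rw [pderiv2_one_one_eq_deriv, hsnd.deriv_eq]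
    simpa using (hD.hasDerivAt_slice_snd.clm_apply (hasDerivAt_const r ((1, 0) : ℝ × ℝ))).deriv
  rw [hmixed, (hF.isSymmSndFDerivAt (by simp)) (0, 1) (1, 0)]
  simpa using (hD.hasDerivAt_slice_fst.clm_apply
    (hasDerivAt_const s ((0, 1) : ℝ × ℝ))).congr_of_eventuallyEq hfst

end PartialDerivatives

lemma le_of_hasDerivAt_of_nonneg {φ φ' : ℝ → ℝ} {a b : ℝ} (hab : a ≤ b)
    (hφ : ∀ x ∈ Icc a b, HasDerivAt φ (φ' x) x) (hφ' : ∀ x ∈ Ioo a b, 0 ≤ φ' x) :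
    φ a ≤ φ b := by
  refine monotoneOn_of_hasDerivWithinAt_nonneg (f' := φ') (convex_Icc a b)
    (fun x hx => (hφ x hx).continuousAt.continuousWithinAt) (fun x hx => ?_) ?_
    (left_mem_Icc.2 hab) (right_mem_Icc.2 hab) hab
  · rw [interior_Icc] at hx
    exact (hφ x (Ioo_subset_Icc_self hx)).hasDerivWithinAt
  · rwa [interior_Icc]

lemma intervalIntegrable_deriv_of_nonpos {φ φ' : ℝ → ℝ} {a b : ℝ} (hab : a ≤ b)
    (hcont : ContinuousOn φ (Icc a b)) (hφ : ∀ x ∈ Ioo a b, HasDerivAt φ (φ' x) x)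
    (hφ' : ∀ x ∈ Ioo a b, φ' x ≤ 0) : IntervalIntegrable φ' volume a b := by
  rw [intervalIntegrable_iff_integrableOn_Ioc_of_le hab]
  simpa using (integrableOn_deriv_of_nonneg hcont.neg (fun x hx => (hφ x hx).neg)
    fun x hx => neg_nonneg.2 (hφ' x hx)).neg

lemma abs_integral_mul_le_mul_integral {ψ φ : ℝ → ℝ} {a b M : ℝ} (hab : a ≤ b)
    (hψ : IntervalIntegrable ψ volume a b) (hψ₀ : ∀ x ∈ Ioo a b, 0 ≤ ψ x)
    (hφ : ∀ x ∈ Ioo a b, |φ x| ≤ M) :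
    |∫ x in a..b, ψ x * φ x| ≤ M * ∫ x in a..b, ψ x := by
  rw [← intervalIntegral.integral_const_mul M ψ, ← Real.norm_eq_abs]
  refine intervalIntegral.norm_integral_le_of_norm_le hab ?_ (hψ.const_mul M)
  filter_upwards [Measure.ae_ne volume b] with x hxb hx
  have hx' : x ∈ Ioo a b := ⟨hx.1, lt_of_le_of_ne hx.2 hxb⟩
  rw [Real.norm_eq_abs, abs_mul, abs_of_nonneg (hψ₀ x hx'), mul_comm]
  exact mul_le_mul_of_nonneg_right (hφ x hx') (hψ₀ x hx')

lemma abs_sub_rpow_le_add {p t u v r : ℝ} (hp : 0 ≤ p) (htv : t ≤ v) (hvu : v ≤ u)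
    (hr : r ∈ Icc (t - (u - v)) v) : |r - t| ^ p ≤ |u - t| ^ p + |v - t| ^ p := by
  have hrt : |r - t| ≤ |u - t| := by
    rw [abs_of_nonneg (by linarith : 0 ≤ u - t)]
    exact abs_le.2 ⟨by linarith [hr.1], by linarith [hr.2]⟩
  exact le_add_of_le_of_nonneg (Real.rpow_le_rpow (abs_nonneg _) hrt hp) (by positivity)

lemma pos_of_mul_div_pos {h x y : ℝ} (hh : 0 < h) (hy : 0 < y) (H : 0 < h * x / y) : 0 < x :=
  (mul_pos_iff_of_pos_left hh).1 ((div_pos_iff_of_pos_right hy).1 H)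

namespace SmoothVariation

variable {ρ : ℝ} {k : ℕ} {F : ℝ → ℝ → ℝ} {K : Set ℝ}

lemma exists_pderiv2_zero_one_neg (hF : SmoothVariation ρ k F) (hρ : 0 < ρ)
    (hK : IsCompact K) : ∃ h₀ > 0, ∀ s ∈ K, ∀ r < s, s - r < h₀ → pderiv2 0 1 F s r < 0 := by
  obtain ⟨h₀, h₀_pos, hA⟩ := hF.condA K hK ρ hρ
  refine ⟨h₀, h₀_pos, fun s hs r hrs hr => ?_⟩
  have h := hA (s - r) (sub_pos.2 hrs) hr s hs
  rw [sub_sub_cancel] at h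
  refine neg_pos.1 (pos_of_mul_div_pos (sub_pos.2 hrs) (hF.mem.pos (s, r) hrs) ?_)
  rw [mul_neg, neg_div]
  linarith [(abs_lt.1 h).2]

lemma exists_pderiv2_one_zero_pos (hF : SmoothVariation ρ k F) (hρ : 0 < ρ)
    (hK : IsCompact K) : ∃ h₀ > 0, ∀ r ∈ K, ∀ s, r < s → s - r < h₀ → 0 < pderiv2 1 0 F s r := by
  obtain ⟨h₀, h₀_pos, hB⟩ := hF.condB K hK ρ hρ
  refine ⟨h₀, h₀_pos, fun r hr s hrs hs => ?_⟩
  have h := hB (s - r) (sub_pos.2 hrs) hs r hr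
  rw [add_sub_cancel] at h
  exact pos_of_mul_div_pos (sub_pos.2 hrs) (hF.mem.pos (s, r) hrs)
    (by linarith [(abs_lt.1 h).1])

lemma exists_pderiv2_one_one_pos (hF : SmoothVariation ρ k F) (hρ : ρ ∈ Ioo 0 1)
    (hk : 2 ≤ k) (hK : IsCompact K) :
    ∃ h₀ > 0, ∀ s ∈ K, ∀ r < s, s - r < h₀ → 0 < pderiv2 1 1 F s r := by
  obtain ⟨h₀, h₀_pos, hC⟩ := hF.condC 2 le_rfl hk K hK (ρ * (1 - ρ)) (by nlinarith [hρ.1, hρ.2])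
  refine ⟨h₀, h₀_pos, fun s hs r hrs hr => ?_⟩
  have h := hC (s - r) (sub_pos.2 hrs) hr s hs
  rw [sub_sub_cancel] at h
  norm_num [Finset.prod_range_succ] at h
  exact pos_of_mul_div_pos (pow_pos (sub_pos.2 hrs) 2) (hF.mem.pos (s, r) hrs)
    (by nlinarith [(abs_lt.1 h).1])

lemma exists_near_diagonal_signs (hF : SmoothVariation ρ k F) (hρ : ρ ∈ Ioo 0 1)
    (hk : 2 ≤ k) (hK : IsCompact K) :
    ∃ h₀ > 0, ∀ s ∈ K, ∀ r ∈ K, r < s → s - r < h₀ →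
      pderiv2 0 1 F s r < 0 ∧ 0 < pderiv2 1 0 F s r ∧ 0 < pderiv2 1 1 F s r := by
  obtain ⟨h₁, h₁_pos, hneg⟩ := hF.exists_pderiv2_zero_one_neg hρ.1 hK
  obtain ⟨h₂, h₂_pos, hincr⟩ := hF.exists_pderiv2_one_zero_pos hρ.1 hK
  obtain ⟨h₃, h₃_pos, hmixed⟩ := hF.exists_pderiv2_one_one_pos hρ hk hK
  refine ⟨min h₁ (min h₂ h₃), by positivity, fun s hs r hr hrs hsr => ?_⟩
  simp only [lt_min_iff] at hsr
  exact ⟨hneg s hs r hrs hsr.1, hincr r hr s hrs hsr.2.1, hmixed s hs r hrs hsr.2.2⟩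

end SmoothVariation

namespace CPlus

variable {k : ℕ} {F : ℝ → ℝ → ℝ}

lemma mono {m : ℕ} (hF : CPlus k F) (hmk : m ≤ k) : CPlus m F :=
  ⟨hF.cont, hF.smooth.of_le (by exact_mod_cast hmk), hF.pos⟩

lemma contDiffAt (hF : CPlus k F) {s r : ℝ} (hrs : r < s) : ContDiffAt ℝ k (uncurry F) (s, r) :=
  hF.smooth.contDiffAt ((isOpen_lt continuous_snd continuous_fst).mem_nhds hrs)

lemma continuousOn_slice_snd (hF : CPlus k F) (s : ℝ) : ContinuousOn (F s) (Iic s) :=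
  hF.cont.comp (continuous_const.prodMk continuous_id).continuousOn fun _ hr => hr

lemma nonneg (hF : CPlus k F) {s r : ℝ} (hrs : r ≤ s) : 0 ≤ F s r := by
  have hlim : Tendsto (F s) (𝓝[<] r) (𝓝 (F s r)) :=
    (hF.continuousOn_slice_snd s r hrs).mono_left
      (nhdsWithin_mono _ fun r' (hr' : r' < r) => hr'.le.trans hrs)
  refine ge_of_tendsto hlim ?_
  filter_upwards [self_mem_nhdsWithin] with r' hr'
  exact (hF.pos (s, r') (lt_of_lt_of_le hr' hrs)).le

variable (hF : CPlus 2 F) {a v u : ℝ}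
include hF

lemma differentiableAt {s r : ℝ} (hrs : r < s) : DifferentiableAt ℝ (uncurry F) (s, r) :=
  (hF.contDiffAt hrs).differentiableAt two_ne_zero

lemma intervalIntegrable_pderiv2_zero_one {w : ℝ} (hav : a ≤ v) (hvw : v ≤ w)
    (hneg : ∀ r ∈ Ioo a v, pderiv2 0 1 F w r ≤ 0) :
    IntervalIntegrable (pderiv2 0 1 F w) volume a v :=
  intervalIntegrable_deriv_of_nonpos hav
    ((hF.continuousOn_slice_snd w).mono fun _ hr => hr.2.trans hvw)
    (fun _ hr => hasDerivAt_pderiv2_zero_one (hF.differentiableAt (hr.2.trans_le hvw))) hneg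

lemma integral_pderiv2_zero_one {w : ℝ} (hav : a ≤ v) (hvw : v ≤ w)
    (hneg : ∀ r ∈ Ioo a v, pderiv2 0 1 F w r ≤ 0) :
    ∫ r in a..v, pderiv2 0 1 F w r = F w v - F w a :=
  intervalIntegral.integral_eq_sub_of_hasDerivAt_of_le hav
    ((hF.continuousOn_slice_snd w).mono fun _ hr => hr.2.trans hvw)
    (fun _ hr => hasDerivAt_pderiv2_zero_one (hF.differentiableAt (hr.2.trans_le hvw)))
    (hF.intervalIntegrable_pderiv2_zero_one hav hvw hneg)

lemma pderiv2_zero_one_le {r : ℝ} (hrv : r < v) (hvu : v ≤ u)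
    (hmixed : ∀ s ∈ Ioo v u, 0 ≤ pderiv2 1 1 F s r) :
    pderiv2 0 1 F v r ≤ pderiv2 0 1 F u r :=
  le_of_hasDerivAt_of_nonneg hvu
    (fun _ hs => hasDerivAt_pderiv2_zero_one_fst (hF.contDiffAt (hrv.trans_le hs.1))) hmixed

lemma integral_sub_pderiv2_zero_one_le (hav : a < v) (hvu : v ≤ u)
    (hneg : ∀ w ∈ Icc v u, ∀ r ∈ Ioo a v, pderiv2 0 1 F w r ≤ 0)
    (hincr : ∀ s ∈ Ioo v u, 0 ≤ pderiv2 1 0 F s a) :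
    ∫ r in a..v, (pderiv2 0 1 F u r - pderiv2 0 1 F v r) ≤ F u v := by
  have hu := hneg u (right_mem_Icc.2 hvu)
  have hv := hneg v (left_mem_Icc.2 hvu)
  have hFa : F v a ≤ F u a := le_of_hasDerivAt_of_nonneg hvu
    (fun _ hs => hasDerivAt_pderiv2_one_zero (hF.differentiableAt (hav.trans_le hs.1))) hincr
  rw [intervalIntegral.integral_sub (hF.intervalIntegrable_pderiv2_zero_one hav.le hvu hu)
    (hF.intervalIntegrable_pderiv2_zero_one hav.le le_rfl hv),
    hF.integral_pderiv2_zero_one hav.le hvu hu, hF.integral_pderiv2_zero_one hav.le le_rfl hv]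
  linarith [hF.nonneg (le_refl v)]

lemma abs_integral_sub_pderiv2_zero_one_mul_le {φ : ℝ → ℝ} {M : ℝ} (hav : a < v) (hvu : v ≤ u)
    (hsign : ∀ s r, a ≤ r → r < s → s ≤ u →
      pderiv2 0 1 F s r ≤ 0 ∧ 0 ≤ pderiv2 1 0 F s r ∧ 0 ≤ pderiv2 1 1 F s r)
    (hφ : ∀ r ∈ Ioo a v, |φ r| ≤ M) :
    |∫ r in a..v, (pderiv2 0 1 F u r - pderiv2 0 1 F v r) * φ r| ≤ M * F u v := by
  have hneg : ∀ w ∈ Icc v u, ∀ r ∈ Ioo a v, pderiv2 0 1 F w r ≤ 0 := fun w hw r hr =>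
    (hsign w r hr.1.le (hr.2.trans_le hw.1) hw.2).1
  have hweight : ∀ r ∈ Ioo a v, 0 ≤ pderiv2 0 1 F u r - pderiv2 0 1 F v r := fun r hr =>
    sub_nonneg.2 <| hF.pderiv2_zero_one_le hr.2 hvu fun s hs =>
      (hsign s r hr.1.le (hr.2.trans hs.1) hs.2.le).2.2
  have hintegrable := (hF.intervalIntegrable_pderiv2_zero_one hav.le hvu
    (hneg u (right_mem_Icc.2 hvu))).sub
    (hF.intervalIntegrable_pderiv2_zero_one hav.le le_rfl (hneg v (left_mem_Icc.2 hvu)))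
  calc _ ≤ M * ∫ r in a..v, (pderiv2 0 1 F u r - pderiv2 0 1 F v r) :=
        abs_integral_mul_le_mul_integral hav.le hintegrable hweight hφ
    _ ≤ M * F u v := by
        refine mul_le_mul_of_nonneg_left (hF.integral_sub_pderiv2_zero_one_le hav hvu hneg
          fun s hs => (hsign s a le_rfl (hav.trans hs.1) hs.2.le).2.1) ?_
        obtain ⟨r, hr⟩ := nonempty_Ioo.2 hav
        exact (abs_nonneg _).trans (hφ r hr)

end CPlus

theorem bound_I21_near_general
    (d l : ℝ) (hd : d ∈ Set.Ioo (0:ℝ) 1)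
    (F : ℝ → ℝ → ℝ) (hF : SmoothVariation d ((⌊l + d⌋).toNat + 2) F)
    (f : ℝ → ℝ → ℝ) (hf : f = pderiv2 0 1 F)
    (g : ℝ → ℝ)
    (t : ℝ) (ht : t ∈ Set.Ioo (0:ℝ) 1) (ε : ℝ) (hε : ε ∈ Set.Ioo (0:ℝ) l)
    (P : Polynomial ℝ)
    (C₀ : ℝ) (hC₀ : 0 < C₀)
    (hgP : ∀ r ∈ Set.Icc (0:ℝ) 1, |g r - P.eval r| ≤ C₀ * |r - t| ^ (l - ε)) :
    ∃ C > 0, ∃ h' > 0,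
      ∀ u v : ℝ, u ∈ Set.Ioo t (t + h') → v ∈ Set.Ioo t (t + h') → v < u →
        |∫ r in (t - (u - v))..v, (f u r - f v r) * (g r - P.eval r)| ≤
          C * F u v * (|u - t| ^ (l - ε) + |v - t| ^ (l - ε)) := by
  subst hf
  obtain ⟨h₀, h₀_pos, hsign⟩ :=
    hF.exists_near_diagonal_signs hd (by omega) (isCompact_Icc (a := 0) (b := 1))
  obtain ⟨h', h'_pos, hh'₀, hh't, hh't₁⟩ : ∃ h' > 0, h' ≤ h₀ / 2 ∧ h' ≤ t ∧ h' ≤ 1 - t :=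
    ⟨min (h₀ / 2) (min t (1 - t)), lt_min (by positivity) (lt_min ht.1 (sub_pos.2 ht.2)),
      min_le_left _ _, (min_le_right _ _).trans (min_le_left _ _),
      (min_le_right _ _).trans (min_le_right _ _)⟩
  refine ⟨C₀, hC₀, h', h'_pos, ?_⟩
  rintro u v ⟨htu, hu⟩ ⟨htv, hv⟩ hvu
  have hunit : ∀ x, t - (u - v) ≤ x → x ≤ u → x ∈ Icc (0 : ℝ) 1 := fun x hax hxu =>
    ⟨by linarith, by linarith⟩
  have hbound : ∀ r ∈ Ioo (t - (u - v)) v,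
      |g r - P.eval r| ≤ C₀ * (|u - t| ^ (l - ε) + |v - t| ^ (l - ε)) := fun r hr =>
    (hgP r (hunit r hr.1.le (by linarith [hr.2]))).trans <| mul_le_mul_of_nonneg_left
      (abs_sub_rpow_le_add (by linarith [hε.2]) htv.le hvu.le (Ioo_subset_Icc_self hr)) hC₀.le
  calc _ ≤ C₀ * (|u - t| ^ (l - ε) + |v - t| ^ (l - ε)) * F u v :=
        (hF.mem.mono (by omega)).abs_integral_sub_pderiv2_zero_one_mul_le (by linarith) hvu.le
          (fun s r har hrs hsu =>
            let ⟨h₁, h₂, h₃⟩ := hsign s (hunit s (by linarith) hsu) r (hunit r har (by linarith))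
              hrs (by linarith)
            ⟨h₁.le, h₂.le, h₃.le⟩) hbound
    _ = C₀ * F u v * (|u - t| ^ (l - ε) + |v - t| ^ (l - ε)) := by ring

/-- Lemma 6.4: bound on the near-diagonal part of `I₂,₁`. -/
theorem bound_I21_near
    (d l : ℝ) (hd : d ∈ Set.Ioo (0:ℝ) 1) (hl : 0 < l)
    (F : ℝ → ℝ → ℝ) (hF : SmoothVariation d ((⌊l + d⌋).toNat + 2) F)
    (f : ℝ → ℝ → ℝ) (hf : f = pderiv2 0 1 F)
    (g : ℝ → ℝ) (hg : CadlagOn g)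
    (t : ℝ) (ht : t ∈ Set.Ioo (0:ℝ) 1) (ε : ℝ) (hε : ε ∈ Set.Ioo (0:ℝ) l)
    (P : Polynomial ℝ) (hP : (P.natDegree : ℤ) ≤ ⌊l⌋)
    (C₀ : ℝ) (hC₀ : 0 < C₀)
    (hgP : ∀ r ∈ Set.Icc (0:ℝ) 1, |g r - P.eval r| ≤ C₀ * |r - t| ^ (l - ε)) :
    ∃ C > 0, ∃ h' > 0,
      ∀ u v : ℝ, u ∈ Set.Ioo t (t + h') → v ∈ Set.Ioo t (t + h') → v < u →
        |∫ r in (t - (u - v))..v, (f u r - f v r) * (g r - P.eval r)| ≤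
          C * F u v * (|u - t| ^ (l - ε) + |v - t| ^ (l - ε)) :=
  bound_I21_near_general d l hd F hF f hf g t ht ε hε P C₀ hC₀ hgP
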